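/- arXiv:2605.07113 — 5 statements merged into one kernel-verified Lean document; each statement's English description precedes it below -/
import Mathlib

section
/- Let M ∈ ℝ^{n×n} be a real symmetric matrix, let μ be an eigenvalue of M, and let P_μ ∈ ℝ^{n×n} be the matrix (in the standard basis) of the orthogonal projection of ℝⁿ onto the eigenspace {v : M v = μ v}. If c is a stable δ-MC-WL coloring for M, then c refines P_μ; that is, for all index pairs, c(i,j) = c(p,q) implies (P_μ)_{ij} = (P_μ)_{pq}. -/
/-!
A stable δ-MC-WL coloring `c` of `M` refines the identity (it separates diagonal from
off-diagonal pairs), and if it refines `A` then it refines `A * M + M * A`: writing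
`A i j = g (c (i, j))`, the entry `(A * M + M * A) i j` is the sum of `m * g γ` over the pairs
`(γ, m)` of the δ-MC-WL multiset of `(i, j)`, which depends only on `c (i, j)`. Taking
`A = M ^ k` shows that `c` refines every power of `M`, hence every polynomial in `M`. For
symmetric `M` the projection onto the `μ`-eigenspace is such a polynomial, namely the Lagrange
basis polynomial at `μ` for the spectrum, since `M` is diagonalizable with orthogonal eigenspaces.
-/

/-- The multiset aggregated in the δ-MC-WL update for index pair `(i, j)`:
`{{(c(i,u), M_{uj}) : u, M_{uj} ≠ 0}} + {{(c(u,j), M_{iu}) : u, M_{iu} ≠ 0}}`. -/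
noncomputable def deltaMCWLMultiset {n : ℕ} {Γ : Type*} (c : Fin n × Fin n → Γ)
    (M : Matrix (Fin n) (Fin n) ℝ) (i j : Fin n) : Multiset (Γ × ℝ) :=
  (Finset.univ.filter (fun u => M u j ≠ 0)).val.map (fun u => (c (i, u), M u j)) +
  (Finset.univ.filter (fun u => M i u ≠ 0)).val.map (fun u => (c (u, j), M i u))

/-- `c` is a stable δ-MC-WL coloring for `M`. -/
def IsStableDeltaMCWL {n : ℕ} {Γ : Type*} (c : Fin n × Fin n → Γ)
    (M : Matrix (Fin n) (Fin n) ℝ) : Prop :=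
  ∀ i j p q : Fin n, c (i, j) = c (p, q) →
    M i j = M p q ∧ (i = j ↔ p = q) ∧
      deltaMCWLMultiset c M i j = deltaMCWLMultiset c M p q

/-- The coloring `c` refines the matrix `A`. -/
def Refines {n : ℕ} {Γ : Type*} (c : Fin n × Fin n → Γ)
    (A : Matrix (Fin n) (Fin n) ℝ) : Prop :=
  ∀ i j p q : Fin n, c (i, j) = c (p, q) → A i j = A p q

open Polynomial Module.End

namespace LinearMap.IsSymmetric

variable {𝕜 E : Type*} [RCLike 𝕜] [NormedAddCommGroup E] [InnerProductSpace 𝕜 E]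
  [FiniteDimensional 𝕜 E] {T : E →ₗ[𝕜] E}

theorem aeval_eq_starProjection (hT : T.IsSymmetric) {μ : 𝕜} {p : 𝕜[X]} (hμ : p.eval μ = 1)
    (hp : ∀ ν : Eigenvalues T, (ν : 𝕜) ≠ μ → p.eval (ν : 𝕜) = 0) :
    aeval T p = ((eigenspace T μ).starProjection : E →ₗ[𝕜] E) := by
  ext v
  have hv : v ∈ ⨆ ν : Eigenvalues T, eigenspace T ν := by
    rw [Submodule.orthogonal_eq_bot_iff.mp hT.orthogonalComplement_iSup_eigenspaces_eq_bot']
    exact Submodule.mem_top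
  induction hv using Submodule.iSup_induction' with
  | mem ν x hx =>
    rw [aeval_apply_of_mem_apply_eq_smul (mem_eigenspace_iff.mp hx)]
    by_cases hνμ : (ν : 𝕜) = μ
    · rw [hνμ] at hx ⊢
      simp [hμ, Submodule.starProjection_eq_self_iff.mpr hx]
    · have hx_perp : x ∈ (eigenspace T μ)ᗮ := fun w hw =>
        hT.orthogonalFamily_eigenspaces (Ne.symm hνμ) ⟨w, hw⟩ ⟨x, hx⟩
      simp [hp ν hνμ, Submodule.starProjection_apply,
        Submodule.orthogonalProjectionOnto_apply_of_mem_orthogonal hx_perp]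
  | zero => simp
  | add x y _ _ hx hy => simp only [map_add, hx, hy]

theorem exists_aeval_eq_starProjection (hT : T.IsSymmetric) (μ : 𝕜) :
    ∃ p : 𝕜[X], aeval T p = ((eigenspace T μ).starProjection : E →ₗ[𝕜] E) := by
  classical
  let s : Finset 𝕜 := insert μ (Finset.univ.image fun ν : Eigenvalues T => (ν : 𝕜))
  refine ⟨Lagrange.basis s (fun x => x) μ, hT.aeval_eq_starProjection ?_ fun ν hν => ?_⟩
  · exact Lagrange.eval_basis_self (Set.injOn_id _) (Finset.mem_insert_self μ _)
  · exact Lagrange.eval_basis_of_ne (v := fun x : 𝕜 => x) (Ne.symm hν)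
      (Finset.mem_insert_of_mem (Finset.mem_image_of_mem (fun ν : Eigenvalues T => (ν : 𝕜))
        (Finset.mem_univ ν)))

end LinearMap.IsSymmetric

theorem Matrix.toEuclideanLin_aeval {ι 𝕜 : Type*} [Fintype ι] [DecidableEq ι] [RCLike 𝕜]
    (M : Matrix ι ι 𝕜) (p : 𝕜[X]) :
    toEuclideanLin (aeval M p) = aeval (toEuclideanLin M) p :=
  (aeval_algHom_apply (toLpLinAlgEquiv 2 : _ ≃ₐ[𝕜] _).toAlgHom M p).symm

section Coloring

variable {n : ℕ} {Γ : Type*} {c : Fin n × Fin n → Γ} {M A : Matrix (Fin n) (Fin n) ℝ}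

theorem Refines.exists_eq_comp (hA : Refines c A) : ∃ g : Γ → ℝ, ∀ i j, A i j = g (c (i, j)) :=
  ⟨Function.extend c (fun x => A x.1 x.2) (fun _ => 0), fun i j =>
    (Function.FactorsThrough.extend_apply (fun a b h => hA a.1 a.2 b.1 b.2 h) _ (i, j)).symm⟩

theorem sum_map_deltaMCWLMultiset (c : Fin n × Fin n → Γ) (M : Matrix (Fin n) (Fin n) ℝ)
    (g : Γ → ℝ) (i j : Fin n) :
    ((deltaMCWLMultiset c M i j).map fun x => x.2 * g x.1).sum =
      ∑ u, M u j * g (c (i, u)) + ∑ u, M i u * g (c (u, j)) := by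
  rw [deltaMCWLMultiset, Multiset.map_add, Multiset.sum_add, Multiset.map_map, Multiset.map_map,
    Finset.sum_map_val, Finset.sum_map_val]
  congr 1 <;> exact Finset.sum_filter_of_ne fun u _ hu h0 => hu (by simp [h0])

namespace IsStableDeltaMCWL

theorem refines_one (hc : IsStableDeltaMCWL c M) : Refines c 1 := by
  intro i j p q h
  have hdiag : i = j ↔ p = q := (hc i j p q h).2.1
  by_cases hij : i = j
  · rw [hij, hdiag.mp hij, Matrix.one_apply_eq, Matrix.one_apply_eq]
  · rw [Matrix.one_apply_ne hij, Matrix.one_apply_ne (mt hdiag.mpr hij)]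

theorem refines_mul_add_mul (hc : IsStableDeltaMCWL c M) (hA : Refines c A) :
    Refines c (A * M + M * A) := by
  obtain ⟨g, hg⟩ := hA.exists_eq_comp
  have hentry : ∀ i j, (A * M + M * A) i j =
      ((deltaMCWLMultiset c M i j).map fun x => x.2 * g x.1).sum := by
    intro i j
    simp only [sum_map_deltaMCWLMultiset, Matrix.add_apply, Matrix.mul_apply, hg, mul_comm]
  intro i j p q h
  rw [hentry, hentry, (hc i j p q h).2.2]

theorem refines_pow (hc : IsStableDeltaMCWL c M) (k : ℕ) : Refines c (M ^ k) := by
  induction k with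
  | zero => simpa using hc.refines_one
  | succ k ih =>
    intro i j p q h
    have h2 := hc.refines_mul_add_mul ih i j p q h
    rw [← pow_succ, ← pow_succ', Matrix.add_apply, Matrix.add_apply] at h2
    linarith

theorem refines_aeval (hc : IsStableDeltaMCWL c M) (p : ℝ[X]) : Refines c (aeval M p) := by
  intro i j p' q' h
  simp only [aeval_eq_sum_range, Matrix.sum_apply, Matrix.smul_apply, hc.refines_pow _ i j p' q' h]

end IsStableDeltaMCWL

end Coloring

theorem stable_deltaMCWL_refines_eigenprojection_general {n : ℕ} {Γ : Type*}
    (M : Matrix (Fin n) (Fin n) ℝ) (hM : M.IsSymm)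
    (μ : ℝ)
    (P : Matrix (Fin n) (Fin n) ℝ)
    (hP : Matrix.toEuclideanLin P =
      ((Module.End.eigenspace (Matrix.toEuclideanLin M) μ).subtypeL.comp
        (Submodule.orthogonalProjectionOnto
          (Module.End.eigenspace (Matrix.toEuclideanLin M) μ))).toLinearMap)
    (c : Fin n × Fin n → Γ) (hc : IsStableDeltaMCWL c M) :
    Refines c P := by
  have hT : (Matrix.toEuclideanLin M).IsSymmetric :=
    Matrix.isSymmetric_toEuclideanLin_iff.mpr (Matrix.isHermitian_iff_isSymm.mpr hM)
  obtain ⟨p, hp⟩ := hT.exists_aeval_eq_starProjection μ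
  have hPp : P = aeval M p :=
    Matrix.toEuclideanLin.injective (by rw [hP, Matrix.toEuclideanLin_aeval, hp]; rfl)
  exact hPp ▸ hc.refines_aeval p

/-- If `c` is a stable δ-MC-WL coloring for a real symmetric matrix `M`,
`μ` is an eigenvalue of `M`, and `P` is the matrix (in the standard basis) of the orthogonal
projection of `ℝⁿ` onto the eigenspace of `μ`, then `c` refines `P`. -/
theorem stable_deltaMCWL_refines_eigenprojection {n : ℕ} {Γ : Type*}
    (M : Matrix (Fin n) (Fin n) ℝ) (hM : M.IsSymm)
    (μ : ℝ) (hμ : Module.End.HasEigenvalue (Matrix.toEuclideanLin M) μ)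
    (P : Matrix (Fin n) (Fin n) ℝ)
    (hP : Matrix.toEuclideanLin P =
      ((Module.End.eigenspace (Matrix.toEuclideanLin M) μ).subtypeL.comp
        (Submodule.orthogonalProjectionOnto
          (Module.End.eigenspace (Matrix.toEuclideanLin M) μ))).toLinearMap)
    (c : Fin n × Fin n → Γ) (hc : IsStableDeltaMCWL c M) :
    Refines c P :=
  stable_deltaMCWL_refines_eigenprojection_general M hM μ P hP c hc
end

section
/- Let M ∈ ℝ^{n×n} be a real symmetric matrix and let c be a stable δ-MC-WL coloring for M. Then for every natural number d (including d = 0, where M^0 is the identity matrix), c refines the matrix power M^d; that is, c(i,j) = c(p,q) implies (M^d)_{ij} = (M^d)_{pq} for all index pairs. -/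
open Finset in
lemma deltaMCWL_sum_key {n : ℕ} {Γ : Type*} (c : Fin n × Fin n → Γ)
    (M A : Matrix (Fin n) (Fin n) ℝ) (hA : Refines c A) (g : Γ → ℝ)
    (hg : ∀ i j : Fin n, g (c (i, j)) = A i j) (i j : Fin n) :
    ((deltaMCWLMultiset c M i j).map (fun p => g p.1 * p.2)).sum
      = (A * M) i j + (M * A) i j := by
  unfold deltaMCWLMultiset
  rw [Multiset.map_add, Multiset.sum_add, Multiset.map_map, Multiset.map_map]
  have h1 : ((Finset.univ.filter (fun u => M u j ≠ 0)).val.map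
      ((fun p : Γ × ℝ => g p.1 * p.2) ∘ (fun u => (c (i, u), M u j)))).sum
      = ∑ u ∈ Finset.univ.filter (fun u => M u j ≠ 0), A i u * M u j := by
    rw [Finset.sum]
    congr 1
    apply Multiset.map_congr rfl
    intro u _
    simp [hg]
  have h2 : ((Finset.univ.filter (fun u => M i u ≠ 0)).val.map
      ((fun p : Γ × ℝ => g p.1 * p.2) ∘ (fun u => (c (u, j), M i u)))).sum
      = ∑ u ∈ Finset.univ.filter (fun u => M i u ≠ 0), A u j * M i u := by
    rw [Finset.sum]
    congr 1
    apply Multiset.map_congr rfl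
    intro u _
    simp [hg]
  rw [h1, h2, Matrix.mul_apply, Matrix.mul_apply]
  rw [Finset.sum_filter_of_ne (by intro u _ h hMu; exact absurd (by rw [hMu, mul_zero]) h),
    Finset.sum_filter_of_ne (by intro u _ h hMu; exact absurd (by rw [hMu, mul_zero]) h)]
  congr 1
  exact Finset.sum_congr rfl fun u _ => mul_comm _ _

/-- A stable δ-MC-WL coloring for a symmetric matrix `M` refines every matrix power `M ^ d`. -/
theorem stable_deltaMCWL_refines_pow {n : ℕ} {Γ : Type*}
    (M : Matrix (Fin n) (Fin n) ℝ) (hM : M.IsSymm)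
    (c : Fin n × Fin n → Γ) (hc : IsStableDeltaMCWL c M) :
    ∀ d : ℕ, Refines c (M ^ d) := by
  intro d
  induction d with
  | zero =>
    intro i j p q h
    simp only [pow_zero, Matrix.one_apply]
    rcases (hc i j p q h).2.1 with ⟨h1, h2⟩
    by_cases hij : i = j
    · rw [if_pos hij, if_pos (h1 hij)]
    · rw [if_neg hij, if_neg (fun hpq => hij (h2 hpq))]
  | succ d ih =>
    intro i j p q h
    classical
    set g : Γ → ℝ := fun γ =>
      if hx : ∃ p : Fin n × Fin n, c p = γ then (M ^ d) hx.choose.1 hx.choose.2 else 0 with hgdef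
    have hg : ∀ i j : Fin n, g (c (i, j)) = (M ^ d) i j := by
      intro a b
      have hx : ∃ p : Fin n × Fin n, c p = c (a, b) := ⟨(a, b), rfl⟩
      rw [hgdef]
      simp only [dif_pos hx]
      exact ih hx.choose.1 hx.choose.2 a b hx.choose_spec
    have key1 := deltaMCWL_sum_key c M (M ^ d) ih g hg i j
    have key2 := deltaMCWL_sum_key c M (M ^ d) ih g hg p q
    have hmul := (hc i j p q h).2.2
    rw [hmul, key2] at key1
    have e1 : M ^ d * M = M ^ (d + 1) := (pow_succ M d).symm
    have e2 : M * M ^ d = M ^ (d + 1) := (pow_succ' M d).symm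
    rw [e1, e2] at key1
    linarith
end

section
/- Let M ∈ ℝ^{n×n} be a real symmetric matrix and let c be a stable δ-MC-WL coloring for M. Then for every real polynomial p ∈ ℝ[X], c refines the matrix p(M) obtained by evaluating p at M; that is, c(i,j) = c(p',q') implies p(M)_{ij} = p(M)_{p'q'} for all index pairs. -/
lemma aux_refines_pow {n : ℕ} {Γ : Type*}
    (M : Matrix (Fin n) (Fin n) ℝ)
    (c : Fin n × Fin n → Γ) (hc : IsStableDeltaMCWL c M) :
    ∀ k : ℕ, Refines c (M ^ k) := by
  intro k
  induction k with
  | zero =>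
    intro i j p q h
    have hiff := (hc i j p q h).2.1
    simp only [pow_zero, Matrix.one_apply]
    by_cases hij : i = j
    · simp [hij, hiff.mp hij]
    · have hpq : ¬ p = q := fun hpq => hij (hiff.mpr hpq)
      simp [hij, hpq]
  | succ k ih =>
    intro i j p q h
    classical
    set g : Γ → ℝ := fun γ => if h : ∃ pr : Fin n × Fin n, c pr = γ then
        (M ^ k) h.choose.1 h.choose.2 else 0 with hgdef
    have hg : ∀ a b : Fin n, g (c (a, b)) = (M ^ k) a b := by
      intro a b
      have hex : ∃ pr : Fin n × Fin n, c pr = c (a, b) := ⟨(a, b), rfl⟩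
      simp only [hgdef, dif_pos hex]
      exact ih hex.choose.1 hex.choose.2 a b (by simpa using hex.choose_spec)
    set F : Γ × ℝ → ℝ := fun x => x.2 * g x.1 with hFdef
    have hsum : ∀ a b : Fin n,
        ((deltaMCWLMultiset c M a b).map F).sum = 2 * (M ^ (k + 1)) a b := by
      intro a b
      unfold deltaMCWLMultiset
      rw [Multiset.map_add, Multiset.sum_add, Multiset.map_map, Multiset.map_map]
      have h1 : ((Finset.univ.filter (fun u => M u b ≠ 0)).val.map
            (F ∘ fun u => (c (a, u), M u b))).sum
          = ∑ u ∈ Finset.univ.filter (fun u => M u b ≠ 0),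
              M u b * (M ^ k) a u := by
        refine Finset.sum_congr rfl fun u _ => ?_
        simp [hFdef, hg]
      have h2 : ((Finset.univ.filter (fun u => M a u ≠ 0)).val.map
            (F ∘ fun u => (c (u, b), M a u))).sum
          = ∑ u ∈ Finset.univ.filter (fun u => M a u ≠ 0),
              M a u * (M ^ k) u b := by
        refine Finset.sum_congr rfl fun u _ => ?_
        simp [hFdef, hg]
      rw [h1, h2]
      rw [Finset.sum_subset (Finset.filter_subset _ Finset.univ)
          (fun u _ hu => by
            simp only [Finset.mem_filter, Finset.mem_univ, true_and, not_not] at hu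
            simp [hu]),
        Finset.sum_subset (Finset.filter_subset _ Finset.univ)
          (fun u _ hu => by
            simp only [Finset.mem_filter, Finset.mem_univ, true_and, not_not] at hu
            simp [hu])]
      have e1 : ∑ u, M u b * (M ^ k) a u = (M ^ (k + 1)) a b := by
        rw [pow_succ, Matrix.mul_apply]
        exact Finset.sum_congr rfl fun u _ => mul_comm _ _
      have e2 : ∑ u, M a u * (M ^ k) u b = (M ^ (k + 1)) a b := by
        rw [pow_succ', Matrix.mul_apply]
      rw [e1, e2]; ring
    have hmul := (hc i j p q h).2.2
    have := congrArg (fun s => (Multiset.map F s).sum) hmul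
    simp only [hsum] at this
    linarith

/-- A stable δ-MC-WL coloring for a real symmetric matrix `M` refines `p(M)`
for every real polynomial `p`. -/
theorem stable_deltaMCWL_refines_polynomial {n : ℕ} {Γ : Type*}
    (M : Matrix (Fin n) (Fin n) ℝ) (hM : M.IsSymm)
    (c : Fin n × Fin n → Γ) (hc : IsStableDeltaMCWL c M) :
    ∀ p : Polynomial ℝ, Refines c (Polynomial.aeval M p) := by
  intro p i j p' q' h
  rw [Polynomial.aeval_eq_sum_range]
  simp only [Matrix.sum_apply, Matrix.smul_apply, smul_eq_mul]
  exact Finset.sum_congr rfl fun k _ => by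
    rw [aux_refines_pow M c hc k i j p' q' h]
end

section
/- Let L ∈ ℝ^{n×n} be symmetric, let y ∈ ℝⁿ, and set t := max(0, −λ_min(Diag(y) − L)), where λ_min denotes the smallest eigenvalue of a symmetric matrix. Then for every real symmetric positive semidefinite matrix X ∈ ℝ^{n×n} with X_{ii} = 1 for all i, it holds that ⟨L, X⟩ ≤ Σ_i y_i + n·t; that is, the radially projected dual vector yields a valid upper bound on the Max-Cut SDP objective. -/
/-!
Since every eigenvalue of `Diag(y) - L` is at least `-t`, the matrix `M := Diag(y) - L + t I` is
positive semidefinite. The Frobenius pairing of two positive semidefinite matrices is nonnegative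
(by the Schur product theorem it is `1ᵀ (M ⊙ X) 1`), and for `X` with unit diagonal
`⟨M, X⟩ = Σ_i y_i + n t - ⟨L, X⟩`.
-/

open Matrix Finset

namespace Matrix

open scoped ComplexOrder

variable {𝕜 n : Type*} [RCLike 𝕜] [Fintype n]

theorem PosSemidef.sum_sum_mul_nonneg {A B : Matrix n n 𝕜} (hA : A.PosSemidef)
    (hB : B.PosSemidef) : 0 ≤ ∑ i, ∑ j, A i j * B i j := by
  simpa [dotProduct, mulVec, hadamard, Finset.mul_sum] using
    (hA.hadamard hB).dotProduct_mulVec_nonneg 1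

open scoped MatrixOrder in
theorem IsHermitian.posSemidef_add_smul_one [DecidableEq n] {A : Matrix n n 𝕜}
    (hA : A.IsHermitian) {t : ℝ} (ht : ∀ i, -t ≤ hA.eigenvalues i) :
    (A + t • (1 : Matrix n n 𝕜)).PosSemidef := by
  have h : algebraMap ℝ (Matrix n n 𝕜) (-t) ≤ A := by
    rw [algebraMap_le_iff_le_spectrum hA.isSelfAdjoint, hA.spectrum_real_eq_range_eigenvalues]
    rintro _ ⟨i, rfl⟩
    exact ht i
  rwa [le_iff, Algebra.algebraMap_eq_smul_one, neg_smul, sub_neg_eq_add] at h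

end Matrix

theorem radial_projection_upper_bound_general {n : ℕ}
    (L : Matrix (Fin n) (Fin n) ℝ) (y : Fin n → ℝ)
    (hS : (Matrix.diagonal y - L).IsHermitian)
    (t : ℝ) (ht : t = max 0 (-(⨅ i, hS.eigenvalues i))) :
    ∀ X : Matrix (Fin n) (Fin n) ℝ, X.PosSemidef → (∀ i, X i i = 1) →
      ∑ i, ∑ j, L i j * X i j ≤ (∑ i, y i) + n * t := by
  intro X hX hXdiag
  have hM : (diagonal y - L + t • 1).PosSemidef := by
    refine hS.posSemidef_add_smul_one fun i => ?_
    have hmin := ciInf_le (Set.finite_range hS.eigenvalues).bddBelow i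
    rw [ht]
    linarith [le_max_right 0 (-(⨅ i, hS.eigenvalues i))]
  have hpair : ∑ i, ∑ j, (diagonal y - L + t • 1) i j * X i j
      = (∑ i, y i) + n * t - ∑ i, ∑ j, L i j * X i j := by
    simp only [Matrix.add_apply, Matrix.sub_apply, diagonal_apply, Matrix.smul_apply, one_apply,
      smul_eq_mul, mul_ite, mul_one, mul_zero, add_mul, sub_mul, ite_mul, zero_mul, sum_add_distrib,
      sum_sub_distrib, sum_ite_eq, mem_univ, if_true, hXdiag, sum_const, card_univ,
      Fintype.card_fin, nsmul_eq_mul]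
    ring
  linarith [hM.sum_sum_mul_nonneg hX]

/-- The radially projected dual vector yields a valid upper bound on the
Max-Cut SDP objective: with `t := max(0, -λ_min(Diag(y) - L))`, every symmetric PSD `X` with
unit diagonal satisfies `⟨L, X⟩ ≤ Σ_i y_i + n·t`. -/
theorem radial_projection_upper_bound {n : ℕ}
    (L : Matrix (Fin n) (Fin n) ℝ) (hL : L.IsSymm) (y : Fin n → ℝ)
    (hS : (Matrix.diagonal y - L).IsHermitian)
    (t : ℝ) (ht : t = max 0 (-(⨅ i, hS.eigenvalues i))) :
    ∀ X : Matrix (Fin n) (Fin n) ℝ, X.PosSemidef → (∀ i, X i i = 1) →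
      ∑ i, ∑ j, L i j * X i j ≤ (∑ i, y i) + n * t :=
  radial_projection_upper_bound_general L y hS t ht
end

section
/- Pruning correctness in SDP-based branch and bound: let w ∈ ℤ^{n×n} be a symmetric integer weight matrix with zero diagonal, let L be the associated weighted graph Laplacian, let y ∈ ℝⁿ satisfy that Diag(y) − L is positive semidefinite, and let k ∈ ℤ. If (1/4)·Σ_i y_i < k + 1, then for every x ∈ {−1, 1}ⁿ, the cut value satisfies (1/4)·xᵀ L x ≤ k. -/
/-!
For a sign vector `x`, let `a` and `b` be the indicator vectors of `{x = 1}` and `{x = -1}`, so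
`x = a - b` and `a + b = 1`. On sign vectors the Laplacian form is `1ᵀw1 - xᵀwx`, which by
polarization and symmetry of `w` equals `4·aᵀwb`, four times an integer (the cut weight).
Dual feasibility and `xᵢ² = 1` bound it by `Σ yᵢ < 4(k + 1)`, so the cut weight is at most `k`.
-/

/-- The weighted graph Laplacian of a weight matrix `w`:
`L_{ii} = Σ_j w_{ij}` and `L_{ij} = -w_{ij}` for `i ≠ j`. -/
def graphLaplacian {n : ℕ} (w : Matrix (Fin n) (Fin n) ℝ) : Matrix (Fin n) (Fin n) ℝ :=
  Matrix.of fun i j => if i = j then ∑ k, w i k else -w i j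

open Matrix

section QuadraticForms

variable {ι R : Type*} [Fintype ι] [CommRing R]

lemma dotProduct_diagonal_mulVec_of_mul_self_eq_one [DecidableEq ι] {x : ι → R}
    (hx : ∀ i, x i * x i = 1) (d : ι → R) : x ⬝ᵥ (diagonal d *ᵥ x) = ∑ i, d i := by
  simp only [dotProduct, mulVec_diagonal]
  exact Finset.sum_congr rfl fun i _ => by linear_combination d i * hx i

lemma Matrix.IsSymm.dotProduct_mulVec_comm {A : Matrix ι ι R} (hA : A.IsSymm) (a b : ι → R) :
    b ⬝ᵥ (A *ᵥ a) = a ⬝ᵥ (A *ᵥ b) := by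
  rw [dotProduct_mulVec, dotProduct_comm, ← mulVec_transpose, hA.eq]

lemma Matrix.IsSymm.add_dotProduct_mulVec_add_sub {A : Matrix ι ι R} (hA : A.IsSymm)
    (a b : ι → R) :
    (a + b) ⬝ᵥ (A *ᵥ (a + b)) - (a - b) ⬝ᵥ (A *ᵥ (a - b)) = 4 * (a ⬝ᵥ (A *ᵥ b)) := by
  simp only [mulVec_add, mulVec_sub, add_dotProduct, dotProduct_add, sub_dotProduct,
    dotProduct_sub, hA.dotProduct_mulVec_comm a b]
  ring

lemma Matrix.PosSemidef.dotProduct_mulVec_le_sum_of_diagonal_sub [DecidableEq ι]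
    [PartialOrder R] [IsOrderedAddMonoid R] [StarRing R] [TrivialStar R]
    {A : Matrix ι ι R} {y : ι → R} (h : (diagonal y - A).PosSemidef) {x : ι → R}
    (hx : ∀ i, x i * x i = 1) : x ⬝ᵥ (A *ᵥ x) ≤ ∑ i, y i := by
  have := h.dotProduct_mulVec_nonneg x
  rwa [star_trivial, sub_mulVec, dotProduct_sub,
    dotProduct_diagonal_mulVec_of_mul_self_eq_one hx, sub_nonneg] at this

end QuadraticForms

section GraphLaplacian

variable {n : ℕ}

lemma graphLaplacian_eq_diagonal_sub {w : Matrix (Fin n) (Fin n) ℝ} (hdiag : ∀ i, w i i = 0) :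
    graphLaplacian w = diagonal (w *ᵥ 1) - w := by
  ext i j
  by_cases h : i = j
  · subst h
    simp [graphLaplacian, mulVec, dotProduct, hdiag]
  · simp [graphLaplacian, h]

lemma dotProduct_graphLaplacian_mulVec_of_mul_self_eq_one {w : Matrix (Fin n) (Fin n) ℝ}
    (hdiag : ∀ i, w i i = 0) {x : Fin n → ℝ} (hx : ∀ i, x i * x i = 1) :
    x ⬝ᵥ (graphLaplacian w *ᵥ x) = 1 ⬝ᵥ (w *ᵥ 1) - x ⬝ᵥ (w *ᵥ x) := by
  rw [graphLaplacian_eq_diagonal_sub hdiag, sub_mulVec, dotProduct_sub,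
    dotProduct_diagonal_mulVec_of_mul_self_eq_one hx, one_dotProduct]

lemma exists_dotProduct_graphLaplacian_mulVec_eq_four_mul {w : Matrix (Fin n) (Fin n) ℤ}
    (hw : w.IsSymm) (hdiag : ∀ i, w i i = 0) {x : Fin n → ℝ} (hx : ∀ i, x i = 1 ∨ x i = -1) :
    ∃ c : ℤ, x ⬝ᵥ (graphLaplacian (w.map (Int.cast : ℤ → ℝ)) *ᵥ x) = 4 * c := by
  set a : Fin n → ℤ := fun i => if x i = 1 then 1 else 0
  refine ⟨a ⬝ᵥ (w *ᵥ (1 - a)), ?_⟩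
  have hsq : ∀ i, x i * x i = 1 := fun i => mul_self_eq_one_iff.mpr (hx i)
  have hone : (Int.cast ∘ a + Int.cast ∘ (1 - a) : Fin n → ℝ) = 1 := by
    funext i
    simp
  have hxa : x = (Int.cast ∘ a - Int.cast ∘ (1 - a) : Fin n → ℝ) := by
    funext i
    rcases hx i with h | h <;> norm_num [a, h]
  rw [dotProduct_graphLaplacian_mulVec_of_mul_self_eq_one (by simp [hdiag]) hsq, ← hone, hxa,
    (hw.map _).add_dotProduct_mulVec_add_sub]
  simp [dotProduct, mulVec]

end GraphLaplacian

/-- Pruning correctness in SDP-based branch and bound: for an integer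
symmetric weight matrix `w` with zero diagonal and Laplacian `L`, if `y` is dual feasible
(`Diag(y) - L` PSD) and `(1/4)·Σ_i y_i < k + 1` for an integer `k`, then every cut value
`(1/4)·xᵀ L x` with `x ∈ {-1,1}ⁿ` is at most `k`. -/
theorem bnb_pruning_correct {n : ℕ}
    (w : Matrix (Fin n) (Fin n) ℤ) (hw : w.IsSymm) (hdiag : ∀ i, w i i = 0)
    (y : Fin n → ℝ)
    (hy : (Matrix.diagonal y - graphLaplacian (w.map (Int.cast : ℤ → ℝ))).PosSemidef)
    (k : ℤ) (hk : (1 / 4) * ∑ i, y i < (k : ℝ) + 1) :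
    ∀ x : Fin n → ℝ, (∀ i, x i = 1 ∨ x i = -1) →
      (1 / 4) * dotProduct x
        ((graphLaplacian (w.map (Int.cast : ℤ → ℝ))).mulVec x) ≤ (k : ℝ) := by
  intro x hx
  have hsq : ∀ i, x i * x i = 1 := fun i => mul_self_eq_one_iff.mpr (hx i)
  obtain ⟨c, hc⟩ := exists_dotProduct_graphLaplacian_mulVec_eq_four_mul hw hdiag hx
  have hle := hy.dotProduct_mulVec_le_sum_of_diagonal_sub hsq
  rw [hc] at hle ⊢
  have hck : c ≤ k := Int.lt_add_one_iff.mp (by exact_mod_cast (by linarith : (c : ℝ) < k + 1))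
  have hck' : (c : ℝ) ≤ k := by exact_mod_cast hck
  linarith
end
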